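/- Let w be a weighted graph on a finite vertex set V, let v₀ ∈ V be a vertex with d = Σ_u w(v₀,u) > 0, and let V' = V \ {v₀}. Write the Laplacian L of w in block form with respect to the partition ({v₀}, V') as L = [[d, bᵀ],[b, L']]. Then the Schur complement L' − (1/d) · b bᵀ is the Laplacian of a weighted graph on V': there exists a symmetric function w'' : V' → V' → ℝ with w''(u,u) = 0 and w''(u,u') ≥ 0 for all u, u' ∈ V' whose Laplacian equals L' − (1/d) · b bᵀ. -/

import Mathlib

open Matrix

/-!
A matrix is the Laplacian of a weighted graph exactly when it is symmetric, has nonpositive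
off-diagonal entries and zero row sums; the weights are then the negated off-diagonal entries.
Eliminating `v₀` replaces `M u u'` by `M u u' - M u v₀ * M v₀ u' / M v₀ v₀`. Symmetry is kept;
the correction is a product of two nonpositive entries divided by the positive pivot, so
off-diagonal entries stay nonpositive; and row sums stay zero because the row sums of `M` over
`V \ {v₀}` are `-M u v₀` and `-M v₀ v₀`.
-/

section

variable {V K : Type*} [Fintype V] [DecidableEq V]

def weightedLaplacian [AddCommGroup K] (w : V → V → K) : Matrix V V K :=
  of fun u v => if u = v then ∑ x, w u x else -w u v

structure IsLaplacian [AddCommGroup K] [PartialOrder K] (M : Matrix V V K) : Prop where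
  isSymm : M.IsSymm
  nonpos_of_ne : ∀ ⦃u v⦄, u ≠ v → M u v ≤ 0
  sum_row_eq_zero : ∀ u, ∑ v, M u v = 0

def schurComplement [Field K] (M : Matrix V V K) (v₀ : V) :
    Matrix {x // x ≠ v₀} {x // x ≠ v₀} K :=
  of fun u u' => M u u' - (M v₀ v₀)⁻¹ * M u v₀ * M v₀ u'

theorem sum_subtype_ne_eq_neg_of_sum_eq_zero [AddCommGroup K] {f : V → K} (hf : ∑ v, f v = 0)
    (v₀ : V) : ∑ u : {x // x ≠ v₀}, f u = -f v₀ := by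
  rw [Fintype.sum_eq_add_sum_subtype_ne f v₀] at hf
  exact eq_neg_of_add_eq_zero_right hf

theorem weightedLaplacian_eq_diagonal_sub [AddCommGroup K] {w : V → V → K}
    (hdiag : ∀ u, w u u = 0) : weightedLaplacian w = diagonal (fun u => ∑ x, w u x) - of w := by
  ext u v
  by_cases h : u = v
  · subst h; simp [weightedLaplacian, hdiag]
  · simp [weightedLaplacian, h]

section OrderedField

variable [Field K] [LinearOrder K] [IsStrictOrderedRing K]

theorem isLaplacian_weightedLaplacian {w : V → V → K} (hsym : ∀ u v, w u v = w v u)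
    (hnn : ∀ u v, 0 ≤ w u v) (hdiag : ∀ u, w u u = 0) : IsLaplacian (weightedLaplacian w) where
  isSymm := IsSymm.ext fun u v => by
    by_cases h : u = v
    · subst h; rfl
    · simp [weightedLaplacian, h, Ne.symm h, hsym u v]
  nonpos_of_ne u v h := by simp [weightedLaplacian, h, hnn u v]
  sum_row_eq_zero u := by
    simp only [weightedLaplacian_eq_diagonal_sub hdiag, Matrix.sub_apply, diagonal_apply, of_apply,
      Finset.sum_sub_distrib, Finset.sum_ite_eq, Finset.mem_univ, if_true, sub_self]

namespace IsLaplacian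

variable {M : Matrix V V K}

theorem schurComplement (hM : IsLaplacian M) {v₀ : V} (hpiv : 0 < M v₀ v₀) :
    IsLaplacian (schurComplement M v₀) where
  isSymm := IsSymm.ext fun u u' => by
    simp only [_root_.schurComplement, of_apply, hM.isSymm.apply]
    ring
  nonpos_of_ne u u' h := by
    have hcorr : 0 ≤ (M v₀ v₀)⁻¹ * M u v₀ * M v₀ u' :=
      mul_nonneg_of_nonpos_of_nonpos
        (mul_nonpos_of_nonneg_of_nonpos (inv_nonneg.mpr hpiv.le) (hM.nonpos_of_ne u.2))
        (hM.nonpos_of_ne (Ne.symm u'.2))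
    simp only [_root_.schurComplement, of_apply]
    linarith [hM.nonpos_of_ne (Subtype.coe_injective.ne h)]
  sum_row_eq_zero u := by
    simp only [_root_.schurComplement, of_apply, Finset.sum_sub_distrib, ← Finset.mul_sum,
      sum_subtype_ne_eq_neg_of_sum_eq_zero (hM.sum_row_eq_zero _)]
    field_simp
    ring

theorem exists_weights (hM : IsLaplacian M) :
    ∃ w : V → V → K, (∀ u v, w u v = w v u) ∧ (∀ u, w u u = 0) ∧ (∀ u v, 0 ≤ w u v) ∧
      weightedLaplacian w = M := by
  refine ⟨fun u v => if u = v then 0 else -M u v, fun u v => ?_, fun u => if_pos rfl,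
    fun u v => ?_, ?_⟩
  · by_cases h : u = v
    · simp [h]
    · simp [h, Ne.symm h, hM.isSymm.apply u v]
  · by_cases h : u = v
    · simp [h]
    · simp [h, hM.nonpos_of_ne h]
  · ext u v
    by_cases h : u = v
    · subst h
      have hentry (x : V) :
          (if u = x then 0 else -M u x) = (if u = x then M u x else 0) - M u x := by
        split_ifs with hx <;> simp [hx]
      simp only [weightedLaplacian, of_apply, if_true, hentry, Finset.sum_sub_distrib,
        Finset.sum_ite_eq, Finset.mem_univ, hM.sum_row_eq_zero u, sub_zero]
    · simp [weightedLaplacian, h]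

end IsLaplacian

end OrderedField

end

/-- Eliminating a vertex `v₀` of positive weighted degree `d` from the
Laplacian of a weighted graph, the Schur complement `L' − (1/d)·b bᵀ` is again the
Laplacian of a weighted graph on the remaining vertices. -/
theorem schur_complement_is_laplacian {V : Type*} [Fintype V] [DecidableEq V]
    (w : V → V → ℝ) (hsym : ∀ u v, w u v = w v u)
    (hnn : ∀ u v, 0 ≤ w u v) (hdiag : ∀ u, w u u = 0)
    (v₀ : V) (d : ℝ) (hd : d = ∑ u, w v₀ u) (hdpos : 0 < d)
    (L : Matrix V V ℝ)
    (hL : L = Matrix.of fun u v => if u = v then ∑ x, w u x else - w u v)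
    (b : {x : V // x ≠ v₀} → ℝ) (hb : ∀ u, b u = L u.1 v₀)
    (L' : Matrix {x : V // x ≠ v₀} {x : V // x ≠ v₀} ℝ)
    (hL' : ∀ u u', L' u u' = L u.1 u'.1) :
    ∃ w'' : {x : V // x ≠ v₀} → {x : V // x ≠ v₀} → ℝ,
      (∀ u u', w'' u u' = w'' u' u) ∧ (∀ u, w'' u u = 0) ∧ (∀ u u', 0 ≤ w'' u u') ∧
      (Matrix.of fun u u' => if u = u' then ∑ x, w'' u x else - w'' u u')
        = L' - d⁻¹ • Matrix.vecMulVec b b := by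
  have hLap : IsLaplacian L := hL ▸ isLaplacian_weightedLaplacian hsym hnn hdiag
  have hpiv : L v₀ v₀ = d := by simp [hL, hd]
  have hschur : L' - d⁻¹ • vecMulVec b b = schurComplement L v₀ := by
    ext u u'
    simp only [schurComplement, Matrix.sub_apply, Matrix.smul_apply, vecMulVec_apply, of_apply,
      smul_eq_mul, hL', hb, hpiv, hLap.isSymm.apply v₀ u'.1]
    ring
  rw [hschur]
  exact (hLap.schurComplement (hpiv ▸ hdpos)).exists_weights
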